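/- Let n ≥ 2 be an integer and let s, t > 0 and r ∈ ℝ satisfy st > n + r > 0. Let ν be a Borel measure on [0,∞) such that the function ρ ↦ ν([0,ρ])/ρ^n is nonincreasing on (0,∞) and bounded above by ω_n, and let θ = lim_{ρ→∞} ν([0,ρ])/ρ^n. Then for every λ > 0 the integral K(λ) = ∫_{[0,∞)} ρ^r (λ + ρ^t)^{-s} dν(ρ) is finite, and lim_{λ→∞} λ^{s - (n+r)/t} K(λ) = (n/t) · θ · Γ((n+r)/t) Γ(s - (n+r)/t) / Γ(s). -/

import Mathlib

open Real MeasureTheory Filter Topology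

/-- The volume of the unit ball in `ℝ^n`: `ω_n = π^(n/2) / Γ(n/2 + 1)`. -/
noncomputable def ballVol (n : ℕ) : ℝ := Real.pi ^ ((n : ℝ) / 2) / Real.Gamma ((n : ℝ) / 2 + 1)

/-!
Write `F(u) = ν (-∞, u]`. For `ρ > 0` the integrand `f(ρ) = ρ^r (λ + ρ^t)^(-s)` equals
`-∫_ρ^∞ f'`, and `f' = r k₁ - s t k₂` with the nonnegative kernels `k₁ = u^(r-1) (λ + u^t)^(-s)`
and `k₂ = u^(t+r-1) (λ + u^t)^(-s-1)`. By Tonelli, `∫ f dν = s t ∫₀^∞ k₂ F - r ∫₀^∞ k₁ F`, and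
both integrals are finite because `F(u) ≤ ω_n u^n`. The substitution `u = λ^(1/t) v` turns
`λ^(s-(n+r)/t) ∫₀^∞ k F` into `∫₀^∞ k(1, v) v^n F(λ^(1/t) v) / (λ^(1/t) v)^n dv`, which tends to
`θ ∫₀^∞ v^n k(1, v) dv` by dominated convergence; this is a Beta integral, and `Γ(x + 1) = x Γ(x)`
combines the two limits into the stated constant.
-/

open Set
open scoped ENNReal

theorem intervalIntegral_rpow_mul_one_sub_rpow {a b : ℝ} (ha : 0 < a) (hb : 0 < b) :
    ∫ x in (0 : ℝ)..1, x ^ (a - 1) * (1 - x) ^ (b - 1) = Gamma a * Gamma b / Gamma (a + b) := by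
  have h : ((∫ x in (0 : ℝ)..1, x ^ (a - 1) * (1 - x) ^ (b - 1) : ℝ) : ℂ) =
      Complex.betaIntegral a b := by
    rw [Complex.betaIntegral, ← intervalIntegral.integral_ofReal]
    refine intervalIntegral.integral_congr fun x hx => ?_
    rw [uIcc_of_le zero_le_one] at hx
    push_cast
    rw [Complex.ofReal_cpow hx.1, Complex.ofReal_cpow (sub_nonneg.2 hx.2)]
    push_cast
    ring_nf
  rw [Complex.betaIntegral_eq_Gamma_mul_div _ _ (by simpa) (by simpa), ← Complex.ofReal_add,
    Complex.Gamma_ofReal, Complex.Gamma_ofReal, Complex.Gamma_ofReal] at h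
  exact_mod_cast h

theorem integral_Ioi_rpow_mul_one_add_rpow {a b : ℝ} (ha : 0 < a) (hb : 0 < b) :
    ∫ x in Ioi (0 : ℝ), x ^ (a - 1) * (1 + x) ^ (-(a + b)) = Gamma a * Gamma b / Gamma (a + b) := by
  have himage : (fun x : ℝ => x / (1 + x)) '' Ioi 0 = Ioo 0 1 := by
    ext u
    refine ⟨?_, fun hu => ⟨u / (1 - u), div_pos hu.1 (sub_pos.2 hu.2), ?_⟩⟩
    · rintro ⟨x, hx : 0 < x, rfl⟩
      exact ⟨by positivity, (div_lt_one (by positivity)).2 (by linarith)⟩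
    · have : 1 - u ≠ 0 := (sub_pos.2 hu.2).ne'
      field_simp
      ring
  have hderiv : ∀ x ∈ Ioi (0 : ℝ),
      HasDerivWithinAt (fun x : ℝ => x / (1 + x)) ((1 + x) ^ (-2 : ℝ)) (Ioi 0) x := by
    intro x (hx : 0 < x)
    refine (((hasDerivAt_id x).div ((hasDerivAt_id x).const_add 1) (by positivity)).congr_deriv
      ?_).hasDerivWithinAt
    rw [rpow_neg (by positivity), rpow_two]
    simp
  have hinj : InjOn (fun x : ℝ => x / (1 + x)) (Ioi 0) := by
    intro x (hx : 0 < x) y (hy : 0 < y) hxy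
    field_simp at hxy
    linarith
  have hsubst := integral_image_eq_integral_abs_deriv_smul measurableSet_Ioi hderiv hinj
    (fun u => u ^ (a - 1) * (1 - u) ^ (b - 1))
  rw [himage, ← integral_Ioc_eq_integral_Ioo, ← intervalIntegral.integral_of_le zero_le_one,
    intervalIntegral_rpow_mul_one_sub_rpow ha hb] at hsubst
  rw [hsubst]
  refine setIntegral_congr_fun measurableSet_Ioi fun x (hx : 0 < x) => ?_
  have h1x : 0 < 1 + x := by positivity
  have hsub : 1 - x / (1 + x) = (1 + x)⁻¹ := by field_simp; ring
  rw [smul_eq_mul, abs_of_pos (by positivity), hsub, div_eq_mul_inv, mul_rpow hx.le (by positivity),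
    inv_rpow h1x.le, inv_rpow h1x.le, ← rpow_neg h1x.le, ← rpow_neg h1x.le]
  rw [show -(a + b) = -2 + -(a - 1) + -(b - 1) by ring, rpow_add h1x, rpow_add h1x]
  ring

noncomputable def bubbleKernel (t c σ lam u : ℝ) : ℝ := u ^ (c - 1) * (lam + u ^ t) ^ (-σ)

section bubbleKernel

variable {t c σ lam u : ℝ}

@[fun_prop]
theorem measurable_bubbleKernel : Measurable (bubbleKernel t c σ lam) := by
  unfold bubbleKernel; fun_prop

theorem bubbleKernel_nonneg (hlam : 0 ≤ lam) (hu : 0 ≤ u) : 0 ≤ bubbleKernel t c σ lam u :=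
  mul_nonneg (rpow_nonneg hu _) (rpow_nonneg (by positivity) _)

theorem bubbleKernel_le_rpow (hlam : 0 ≤ lam) (hσ : 0 ≤ σ) (hu : 0 < u) :
    bubbleKernel t c σ lam u ≤ u ^ (c - 1 - t * σ) := by
  have hut : 0 < u ^ t := rpow_pos_of_pos hu t
  calc bubbleKernel t c σ lam u ≤ u ^ (c - 1) * (u ^ t) ^ (-σ) :=
        mul_le_mul_of_nonneg_left (rpow_le_rpow_of_nonpos hut (by linarith) (by linarith))
          (rpow_nonneg hu.le _)
    _ = u ^ (c - 1 - t * σ) := by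
        rw [← rpow_mul hu.le, ← rpow_add hu]; ring_nf

theorem bubbleKernel_le_mul_rpow (hlam : 0 < lam) (hσ : 0 ≤ σ) (hu : 0 ≤ u) :
    bubbleKernel t c σ lam u ≤ lam ^ (-σ) * u ^ (c - 1) := by
  rw [bubbleKernel, mul_comm]
  exact mul_le_mul_of_nonneg_right
    (rpow_le_rpow_of_nonpos hlam (by linarith [rpow_nonneg hu t]) (by linarith))
    (rpow_nonneg hu _)

theorem bubbleKernel_mul_pow (n : ℕ) (hu : 0 < u) :
    bubbleKernel t c σ lam u * u ^ n = bubbleKernel t (n + c) σ lam u := by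
  rw [bubbleKernel, bubbleKernel, ← rpow_natCast, add_sub_assoc, add_comm, rpow_add hu]
  ring

theorem bubbleKernel_mul_left {b v : ℝ} (hb : 0 < b) (hv : 0 ≤ v) :
    bubbleKernel t c σ (b ^ t) (b * v) = b ^ (c - 1 - t * σ) * bubbleKernel t c σ 1 v := by
  have hbt : 0 < b ^ t := rpow_pos_of_pos hb t
  rw [bubbleKernel, bubbleKernel, mul_rpow hb.le hv, mul_rpow hb.le hv,
    show b ^ t + b ^ t * v ^ t = b ^ t * (1 + v ^ t) by ring,
    mul_rpow hbt.le (by positivity), ← rpow_mul hb.le, sub_eq_add_neg (c - 1),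
    rpow_add hb, mul_neg]
  ring

theorem integrableOn_Ioi_bubbleKernel {a : ℝ} (ha : 0 < a) (hlam : 0 ≤ lam) (hσ : 0 ≤ σ)
    (hcσ : c < t * σ) : IntegrableOn (bubbleKernel t c σ lam) (Ioi a) := by
  refine ((integrableOn_Ioi_rpow_iff ha).2 (by linarith : c - 1 - t * σ < -1)).mono'
    measurable_bubbleKernel.aestronglyMeasurable ((ae_restrict_iff' measurableSet_Ioi).2 ?_)
  refine Eventually.of_forall fun u (hu : a < u) => ?_
  rw [norm_of_nonneg (bubbleKernel_nonneg hlam (by linarith))]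
  exact bubbleKernel_le_rpow hlam hσ (ha.trans hu)

theorem integrableOn_Ioi_zero_bubbleKernel (hlam : 0 < lam) (hσ : 0 ≤ σ) (hc : 0 < c)
    (hcσ : c < t * σ) : IntegrableOn (bubbleKernel t c σ lam) (Ioi 0) := by
  rw [← Ioc_union_Ioi_eq_Ioi zero_le_one]
  refine IntegrableOn.union ?_ (integrableOn_Ioi_bubbleKernel one_pos hlam.le hσ hcσ)
  have hpow : IntegrableOn (fun u : ℝ => lam ^ (-σ) * u ^ (c - 1)) (Ioc 0 1) :=
    ((intervalIntegral.intervalIntegrable_rpow' (by linarith)).1).const_mul _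
  refine hpow.mono' measurable_bubbleKernel.aestronglyMeasurable
    ((ae_restrict_iff' measurableSet_Ioc).2 (Eventually.of_forall fun u hu => ?_))
  rw [norm_of_nonneg (bubbleKernel_nonneg hlam.le hu.1.le)]
  exact bubbleKernel_le_mul_rpow hlam hσ hu.1.le

theorem integrableOn_bubbleKernel_mul {F : ℝ → ℝ} {ω : ℝ} {n : ℕ}
    (hFm : AEStronglyMeasurable F (volume.restrict (Ioi 0)))
    (hF : ∀ u, 0 < u → ‖F u‖ ≤ ω * u ^ n) (hlam : 0 < lam) (hσ : 0 ≤ σ) (hc : 0 < n + c)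
    (hcσ : n + c < t * σ) :
    IntegrableOn (fun u => bubbleKernel t c σ lam u * F u) (Ioi 0) := by
  refine ((integrableOn_Ioi_zero_bubbleKernel hlam hσ hc hcσ).const_mul ω).mono'
    (measurable_bubbleKernel.aestronglyMeasurable.mul hFm)
    ((ae_restrict_iff' measurableSet_Ioi).2 (Eventually.of_forall fun u (hu : 0 < u) => ?_))
  rw [norm_mul, norm_of_nonneg (bubbleKernel_nonneg hlam.le hu.le), ← bubbleKernel_mul_pow n hu,
    mul_left_comm]
  exact mul_le_mul_of_nonneg_left (hF u hu) (bubbleKernel_nonneg hlam.le hu.le)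

theorem integral_bubbleKernel_one (ht : 0 < t) (hc : 0 < c) (hcσ : c < t * σ) :
    ∫ u in Ioi 0, bubbleKernel t c σ 1 u = Gamma (c / t) * Gamma (σ - c / t) / Gamma σ / t := by
  have hsub := integral_comp_rpow_Ioi (fun x => x ^ (c / t - 1) * (1 + x) ^ (-σ)) ht.ne'
  have hbeta := integral_Ioi_rpow_mul_one_add_rpow (div_pos hc ht)
    (sub_pos.2 ((div_lt_iff₀ ht).2 (by linarith) : c / t < σ))
  rw [add_sub_cancel] at hbeta
  rw [← hbeta, ← hsub, ← integral_div]
  refine setIntegral_congr_fun measurableSet_Ioi fun x (hx : 0 < x) => ?_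
  rw [smul_eq_mul, abs_of_pos ht, ← rpow_mul hx.le, bubbleKernel, mul_sub, mul_div_cancel₀ _ ht.ne']
  field_simp
  rw [← rpow_add hx]
  ring_nf

variable {r s : ℝ}

theorem hasDerivAt_rpow_mul_add_rpow_neg (hlam : 0 ≤ lam) (hu : 0 < u) :
    HasDerivAt (fun x => x ^ r * (lam + x ^ t) ^ (-s))
      (r * bubbleKernel t r s lam u - s * t * bubbleKernel t (t + r) (s + 1) lam u) u := by
  have hbase : 0 < lam + u ^ t := by positivity
  have hpow := hasDerivAt_rpow_const (p := r) (Or.inl hu.ne')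
  have hbub := ((hasDerivAt_rpow_const (p := t) (Or.inl hu.ne')).const_add lam).rpow_const
    (p := -s) (Or.inl hbase.ne')
  refine (hpow.mul hbub).congr_deriv ?_
  rw [bubbleKernel, bubbleKernel, show t + r - 1 = r + (t - 1) by ring, rpow_add hu,
    show -s - 1 = -(s + 1) by ring]
  ring

theorem tendsto_rpow_mul_add_rpow_neg_atTop (hlam : 0 ≤ lam) (hs : 0 ≤ s) (hrs : r < t * s) :
    Tendsto (fun x => x ^ r * (lam + x ^ t) ^ (-s)) atTop (𝓝 0) := by
  have hlim : Tendsto (fun x : ℝ => x ^ (r - t * s)) atTop (𝓝 0) := by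
    simpa using tendsto_rpow_neg_atTop (y := t * s - r) (by linarith)
  have hle : ∀ x, 0 < x → x ^ r * (lam + x ^ t) ^ (-s) ≤ x ^ (r - t * s) := fun x hx => by
    simpa [bubbleKernel] using bubbleKernel_le_rpow (c := r + 1) hlam hs hx
  refine squeeze_zero' ?_ ?_ hlim <;> filter_upwards [eventually_gt_atTop 0] with x hx
  exacts [mul_nonneg (rpow_nonneg hx.le _) (rpow_nonneg (by positivity) _), hle x hx]

theorem rpow_mul_add_rpow_neg_eq_integral (hlam : 0 ≤ lam) (hs : 0 ≤ s) (hrs : r < t * s)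
    {ρ : ℝ} (hρ : 0 < ρ) :
    ρ ^ r * (lam + ρ ^ t) ^ (-s) =
      s * t * (∫ u in Ioi ρ, bubbleKernel t (t + r) (s + 1) lam u) -
        r * ∫ u in Ioi ρ, bubbleKernel t r s lam u := by
  have hint₁ := integrableOn_Ioi_bubbleKernel hρ hlam hs hrs
  have hint₂ := integrableOn_Ioi_bubbleKernel (t := t) (c := t + r) (σ := s + 1) hρ hlam
    (by linarith) (by linarith)
  have hftc := integral_Ioi_of_hasDerivAt_of_tendsto
    (hasDerivAt_rpow_mul_add_rpow_neg hlam hρ).continuousAt.continuousWithinAt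
    (fun u hu => hasDerivAt_rpow_mul_add_rpow_neg hlam (hρ.trans hu))
    ((hint₁.const_mul r).sub (hint₂.const_mul (s * t)))
    (tendsto_rpow_mul_add_rpow_neg_atTop hlam hs hrs)
  rw [integral_sub (hint₁.const_mul r) (hint₂.const_mul (s * t)), integral_const_mul,
    integral_const_mul] at hftc
  linarith

end bubbleKernel

theorem lintegral_setLIntegral_Ici_eq {α : Type*} [MeasurableSpace α] [LinearOrder α]
    [TopologicalSpace α] [OrderClosedTopology α] [SecondCountableTopology α]
    [OpensMeasurableSpace α] (μ ν : Measure α) [SFinite μ] [SFinite ν] {g : α → ℝ≥0∞}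
    (hg : Measurable g) :
    ∫⁻ x, ∫⁻ y in Ici x, g y ∂μ ∂ν = ∫⁻ y, g y * ν (Iic y) ∂μ := by
  have hmeas : Measurable fun p : α × α => {q : α × α | q.1 ≤ q.2}.indicator (g ∘ Prod.snd) p :=
    (hg.comp measurable_snd).indicator (measurableSet_le measurable_fst measurable_snd)
  calc ∫⁻ x, ∫⁻ y in Ici x, g y ∂μ ∂ν
      = ∫⁻ x, ∫⁻ y, {q : α × α | q.1 ≤ q.2}.indicator (g ∘ Prod.snd) (x, y) ∂μ ∂ν := by
        refine lintegral_congr fun x => ?_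
        rw [← lintegral_indicator measurableSet_Ici]
        rfl
    _ = ∫⁻ y, ∫⁻ x, {q : α × α | q.1 ≤ q.2}.indicator (g ∘ Prod.snd) (x, y) ∂ν ∂μ :=
        lintegral_lintegral_swap hmeas.aemeasurable
    _ = ∫⁻ y, g y * ν (Iic y) ∂μ := by
        refine lintegral_congr fun y => ?_
        rw [← lintegral_indicator_const measurableSet_Iic]
        rfl

theorem integrable_integral_Ioi_and_eq (ν : Measure ℝ) [SFinite ν] (hν : ν (Iic 0) = 0)
    (hfin : ∀ u, ν (Iic u) ≠ ∞) {w : ℝ → ℝ} (hw : Measurable w) (hw₀ : ∀ u, 0 < u → 0 ≤ w u)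
    (hwF : IntegrableOn (fun u => w u * (ν (Iic u)).toReal) (Ioi 0)) :
    Integrable (fun ρ => ∫ u in Ioi ρ, w u) ν ∧
      ∫ ρ, (∫ u in Ioi ρ, w u) ∂ν = ∫ u in Ioi 0, w u * (ν (Iic u)).toReal := by
  -- `Ici` rather than `Ioi`, so that Tonelli produces `ν (Iic u)`; for Lebesgue measure they agree.
  set H : ℝ → ℝ≥0∞ := fun ρ => ∫⁻ u in Ici ρ, ENNReal.ofReal (w u) ∂volume.restrict (Ioi 0)
  have hHm : Measurable H :=
    Antitone.measurable fun a b hab => lintegral_mono_set (Ici_subset_Ici.2 hab)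
  have hH : ∀ ρ, 0 < ρ → ∫ u in Ioi ρ, w u = (H ρ).toReal := fun ρ hρ => by
    rw [integral_eq_lintegral_of_nonneg_ae ?_ hw.aestronglyMeasurable]
    · simp only [H]
      rw [Measure.restrict_restrict measurableSet_Ici, inter_eq_left.2 (Ici_subset_Ioi.2 hρ),
        restrict_Ioi_eq_restrict_Ici]
    · exact (ae_restrict_iff' measurableSet_Ioi).2
        (Eventually.of_forall fun u hu => hw₀ u (hρ.trans hu))
  have hlin : ∫⁻ ρ, H ρ ∂ν = ENNReal.ofReal (∫ u in Ioi 0, w u * (ν (Iic u)).toReal) := by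
    rw [lintegral_setLIntegral_Ici_eq _ _ hw.ennreal_ofReal,
      ofReal_integral_eq_lintegral_ofReal hwF]
    · refine setLIntegral_congr_fun measurableSet_Ioi fun u hu => ?_
      rw [ENNReal.ofReal_mul (hw₀ u hu), ENNReal.ofReal_toReal (hfin u)]
    · exact (ae_restrict_iff' measurableSet_Ioi).2 (Eventually.of_forall fun u hu =>
        mul_nonneg (hw₀ u hu) ENNReal.toReal_nonneg)
  have hae : (fun ρ => ∫ u in Ioi ρ, w u) =ᵐ[ν] fun ρ => (H ρ).toReal := by
    filter_upwards [measure_eq_zero_iff_ae_notMem.1 hν] with ρ hρ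
    exact hH ρ (not_le.1 hρ)
  have hfinH : ∫⁻ ρ, H ρ ∂ν ≠ ∞ := hlin ▸ ENNReal.ofReal_ne_top
  refine ⟨(integrable_toReal_of_lintegral_ne_top hHm.aemeasurable hfinH).congr hae.symm, ?_⟩
  rw [integral_congr_ae hae, integral_toReal hHm.aemeasurable (ae_lt_top hHm hfinH), hlin,
    ENNReal.toReal_ofReal (setIntegral_nonneg measurableSet_Ioi fun u hu =>
      mul_nonneg (hw₀ u hu) ENNReal.toReal_nonneg)]

theorem integrable_and_integral_rpow_mul_add_rpow_neg_eq (ν : Measure ℝ) [SFinite ν]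
    (hν : ν (Iic 0) = 0) (hfin : ∀ u, ν (Iic u) ≠ ∞) {t r s lam : ℝ} (hlam : 0 ≤ lam)
    (hs : 0 ≤ s) (hrs : r < t * s)
    (h₁ : IntegrableOn (fun u => bubbleKernel t r s lam u * (ν (Iic u)).toReal) (Ioi 0))
    (h₂ : IntegrableOn (fun u => bubbleKernel t (t + r) (s + 1) lam u * (ν (Iic u)).toReal)
      (Ioi 0)) :
    Integrable (fun ρ => ρ ^ r * (lam + ρ ^ t) ^ (-s)) ν ∧
      ∫ ρ, ρ ^ r * (lam + ρ ^ t) ^ (-s) ∂ν =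
        s * t * (∫ u in Ioi 0, bubbleKernel t (t + r) (s + 1) lam u * (ν (Iic u)).toReal) -
          r * ∫ u in Ioi 0, bubbleKernel t r s lam u * (ν (Iic u)).toReal := by
  obtain ⟨hi₁, he₁⟩ := integrable_integral_Ioi_and_eq ν hν hfin measurable_bubbleKernel
    (fun u hu => bubbleKernel_nonneg hlam hu.le) h₁
  obtain ⟨hi₂, he₂⟩ := integrable_integral_Ioi_and_eq ν hν hfin measurable_bubbleKernel
    (fun u hu => bubbleKernel_nonneg hlam hu.le) h₂
  have hrep : (fun ρ => ρ ^ r * (lam + ρ ^ t) ^ (-s)) =ᵐ[ν] fun ρ =>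
      s * t * (∫ u in Ioi ρ, bubbleKernel t (t + r) (s + 1) lam u) -
        r * ∫ u in Ioi ρ, bubbleKernel t r s lam u := by
    filter_upwards [measure_eq_zero_iff_ae_notMem.1 hν] with ρ hρ
    exact rpow_mul_add_rpow_neg_eq_integral hlam hs hrs (not_le.1 hρ)
  refine ⟨((hi₂.const_mul _).sub (hi₁.const_mul _)).congr hrep.symm, ?_⟩
  rw [integral_congr_ae hrep, integral_sub (hi₂.const_mul _) (hi₁.const_mul _),
    integral_const_mul, integral_const_mul, he₁, he₂]

section scaling

variable {t c σ : ℝ} {F : ℝ → ℝ}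

theorem integral_bubbleKernel_mul_eq_rpow_mul {b : ℝ} (hb : 0 < b) :
    ∫ u in Ioi 0, bubbleKernel t c σ (b ^ t) u * F u =
      b ^ (c - t * σ) * ∫ v in Ioi 0, bubbleKernel t c σ 1 v * F (b * v) := by
  have hsub := integral_comp_mul_left_Ioi (fun u => bubbleKernel t c σ (b ^ t) u * F u) 0 hb
  rw [mul_zero, smul_eq_mul, eq_inv_mul_iff_mul_eq₀ hb.ne'] at hsub
  rw [← hsub, setIntegral_congr_fun measurableSet_Ioi fun v (hv : 0 < v) => by
    rw [bubbleKernel_mul_left hb hv.le, mul_assoc], integral_const_mul, ← mul_assoc,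
    mul_comm b, ← rpow_add_one hb.ne']
  ring_nf

theorem tendsto_integral_bubbleKernel_mul_div_pow {n : ℕ} {ω θ : ℝ} (hFm : Measurable F)
    (hF : ∀ u, 0 < u → ‖F u‖ ≤ ω * u ^ n) (hlim : Tendsto (fun u => F u / u ^ n) atTop (𝓝 θ))
    (hσ : 0 ≤ σ) (hc : 0 < n + c) (hcσ : n + c < t * σ) :
    Tendsto (fun b => ∫ v in Ioi 0, bubbleKernel t c σ 1 v * (F (b * v) / b ^ n)) atTop
      (𝓝 (θ * ∫ v in Ioi 0, bubbleKernel t (n + c) σ 1 v)) := by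
  rw [← integral_const_mul]
  refine tendsto_integral_filter_of_dominated_convergence
    (fun v => ω * bubbleKernel t (n + c) σ 1 v)
    (Eventually.of_forall fun b => by fun_prop) ?_
    ((integrableOn_Ioi_zero_bubbleKernel one_pos hσ hc hcσ).const_mul ω)
    ((ae_restrict_iff' measurableSet_Ioi).2 (Eventually.of_forall fun v (hv : 0 < v) => ?_))
  · filter_upwards [eventually_gt_atTop 0] with b hb
    refine (ae_restrict_iff' measurableSet_Ioi).2 (Eventually.of_forall fun v (hv : 0 < v) => ?_)
    have hFb : ‖F (b * v)‖ / b ^ n ≤ ω * v ^ n := by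
      rw [div_le_iff₀ (by positivity)]
      exact (hF _ (by positivity)).trans_eq (by ring)
    rw [norm_mul, norm_div, norm_of_nonneg (bubbleKernel_nonneg zero_le_one hv.le), norm_pow,
      norm_of_nonneg hb.le, ← bubbleKernel_mul_pow n hv, mul_left_comm]
    exact mul_le_mul_of_nonneg_left hFb (bubbleKernel_nonneg zero_le_one hv.le)
  · have hscaled := hlim.comp (tendsto_id.atTop_mul_const hv)
    rw [← bubbleKernel_mul_pow n hv, mul_comm θ]
    refine (hscaled.const_mul _).congr' ?_
    filter_upwards [eventually_gt_atTop 0] with b hb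
    simp only [Function.comp_apply, id, mul_pow]
    field_simp

theorem tendsto_rpow_mul_integral_bubbleKernel_mul {n : ℕ} {ω θ : ℝ} (ht : 0 < t)
    (hFm : Measurable F) (hF : ∀ u, 0 < u → ‖F u‖ ≤ ω * u ^ n)
    (hlim : Tendsto (fun u => F u / u ^ n) atTop (𝓝 θ)) (hσ : 0 ≤ σ) (hc : 0 < n + c)
    (hcσ : n + c < t * σ) :
    Tendsto (fun lam => lam ^ (σ - (n + c) / t) * ∫ u in Ioi 0, bubbleKernel t c σ lam u * F u)
      atTop (𝓝 (θ * ∫ v in Ioi 0, bubbleKernel t (n + c) σ 1 v)) := by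
  refine ((tendsto_integral_bubbleKernel_mul_div_pow hFm hF hlim hσ hc hcσ).comp
    (tendsto_rpow_atTop (inv_pos.2 ht))).congr' ?_
  filter_upwards [eventually_gt_atTop 0] with lam hlam
  set b := lam ^ t⁻¹
  have hb : 0 < b := rpow_pos_of_pos hlam _
  have hexp : (b ^ t) ^ (σ - (n + c) / t) * b ^ (c - t * σ) = (b ^ n)⁻¹ := by
    rw [← rpow_mul hb.le, ← rpow_add hb, ← rpow_natCast, ← rpow_neg hb.le]
    congr 1
    field_simp
    ring
  rw [Function.comp_apply, ← rpow_inv_rpow hlam.le ht.ne', integral_bubbleKernel_mul_eq_rpow_mul hb,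
    ← mul_assoc, hexp, inv_mul_eq_div, ← integral_div]
  simp only [b, rpow_inv_rpow hlam.le ht.ne', mul_div_assoc]

end scaling

theorem integral_bubbleKernel_one_combination {t a r s : ℝ} (ht : 0 < t) (ha : 0 < a)
    (has : a < s * t) :
    s * t * (∫ v in Ioi 0, bubbleKernel t (a + t) (s + 1) 1 v) -
        r * ∫ v in Ioi 0, bubbleKernel t a s 1 v =
      (a - r) / t * (Gamma (a / t) * Gamma (s - a / t) / Gamma s) := by
  have hs : 0 < s := pos_of_mul_pos_left (ha.trans has) ht.le
  rw [integral_bubbleKernel_one ht (by positivity) (by linarith),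
    integral_bubbleKernel_one ht ha (by linarith), add_div, div_self ht.ne',
    show s + 1 - (a / t + 1) = s - a / t by ring, Gamma_add_one (div_pos ha ht).ne',
    Gamma_add_one hs.ne']
  field_simp

theorem integrable_and_tendsto_rpow_mul_integral_rpow_mul_add_rpow_neg (ν : Measure ℝ)
    {n : ℕ} {ω θ t s r : ℝ} (hν : ν (Iic 0) = 0) (hfin : ∀ u, ν (Iic u) ≠ ∞)
    (hbound : ∀ u, 0 < u → (ν (Iic u)).toReal ≤ ω * u ^ n)
    (hlim : Tendsto (fun u => (ν (Iic u)).toReal / u ^ n) atTop (𝓝 θ))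
    (ht : 0 < t) (hnr : 0 < n + r) (hst : n + r < s * t) :
    (∀ lam : ℝ, 0 < lam → Integrable (fun ρ : ℝ => ρ ^ r * (lam + ρ ^ t) ^ (-s)) ν) ∧
      Tendsto (fun lam : ℝ => lam ^ (s - (n + r) / t) * ∫ ρ, ρ ^ r * (lam + ρ ^ t) ^ (-s) ∂ν)
        atTop (𝓝 (n / t * θ * (Gamma ((n + r) / t) * Gamma (s - (n + r) / t) / Gamma s))) := by
  have hs : 0 < s := pos_of_mul_pos_left (hnr.trans hst) ht.le
  have : IsLocallyFiniteMeasure ν :=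
    ⟨fun x => ⟨Iic (x + 1), Iic_mem_nhds (by linarith), (hfin _).lt_top⟩⟩
  set F : ℝ → ℝ := fun u => (ν (Iic u)).toReal
  have hFm : Measurable F := Monotone.measurable fun a b hab =>
    ENNReal.toReal_mono (hfin b) (measure_mono (Iic_subset_Iic.2 hab))
  have hF : ∀ u, 0 < u → ‖F u‖ ≤ ω * u ^ n := fun u hu => by
    rw [Real.norm_of_nonneg ENNReal.toReal_nonneg]; exact hbound u hu
  have hK : ∀ lam : ℝ, 0 < lam → _ := fun lam hlam =>
    integrable_and_integral_rpow_mul_add_rpow_neg_eq (t := t) ν hν hfin hlam.le hs.le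
      (by nlinarith [n.cast_nonneg (α := ℝ)])
      (integrableOn_bubbleKernel_mul hFm.aestronglyMeasurable hF hlam hs.le hnr (by linarith))
      (integrableOn_bubbleKernel_mul hFm.aestronglyMeasurable hF hlam (by linarith) (by linarith)
        (by linarith))
  refine ⟨fun lam hlam => (hK lam hlam).1, ?_⟩
  have h₁ := tendsto_rpow_mul_integral_bubbleKernel_mul (c := r) (σ := s) ht hFm hF hlim hs.le hnr
    (by linarith)
  have h₂ := tendsto_rpow_mul_integral_bubbleKernel_mul (c := t + r) (σ := s + 1) ht hFm hF hlim
    (by linarith) (by linarith) (by linarith)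
  rw [show s + 1 - (n + (t + r)) / t = s - (n + r) / t by field_simp; ring,
    show (n : ℝ) + (t + r) = n + r + t by ring] at h₂
  have hconst : n / t * θ * (Gamma ((n + r) / t) * Gamma (s - (n + r) / t) / Gamma s) =
      s * t * (θ * ∫ v in Ioi 0, bubbleKernel t (n + r + t) (s + 1) 1 v) -
        r * (θ * ∫ v in Ioi 0, bubbleKernel t (n + r) s 1 v) := by
    rw [mul_left_comm _ θ, mul_left_comm r θ, ← mul_sub,
      integral_bubbleKernel_one_combination ht hnr hst]
    ring
  rw [hconst]
  refine ((h₂.const_mul (s * t)).sub (h₁.const_mul r)).congr' ?_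
  filter_upwards [eventually_gt_atTop 0] with lam hlam
  rw [(hK lam hlam).2]
  ring

theorem measure_Iic_zero_eq_zero {ν : Measure ℝ} {ω : ℝ} {n : ℕ} (hn : n ≠ 0)
    (hneg : ν (Iio 0) = 0) (hbound : ∀ ρ, 0 < ρ → ν (Icc 0 ρ) ≤ ENNReal.ofReal (ω * ρ ^ n)) :
    ν (Iic 0) = 0 := by
  rw [← measure_sdiff_null hneg, Iic_sdiff_Iio_same]
  have hlim : Tendsto (fun ρ : ℝ => ENNReal.ofReal (ω * ρ ^ n)) (𝓝[>] 0) (𝓝 0) := by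
    simpa [hn] using ENNReal.tendsto_ofReal
      (((continuous_const.mul (continuous_pow n)).tendsto 0).mono_left nhdsWithin_le_nhds)
  exact le_antisymm (ge_of_tendsto hlim (eventually_nhdsWithin_of_forall fun ρ (hρ : 0 < ρ) =>
    (measure_mono (singleton_subset_iff.2 (left_mem_Icc.2 hρ.le))).trans (hbound ρ hρ))) bot_le

theorem weighted_bubble_asymptotics_general (n : ℕ) (hn : 2 ≤ n) (s t r : ℝ)
    (ht : 0 < t) (hnr : 0 < (n : ℝ) + r) (hst : (n : ℝ) + r < s * t)
    (ν : Measure ℝ) (hνneg : ν (Set.Iio 0) = 0)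
    (hbound : ∀ ρ : ℝ, 0 < ρ → ν (Set.Icc 0 ρ) ≤ ENNReal.ofReal (ballVol n * ρ ^ n))
    (θ : ℝ)
    (hθ : Tendsto (fun ρ : ℝ => (ν (Set.Icc 0 ρ)).toReal / ρ ^ n) atTop (nhds θ)) :
    (∀ lam : ℝ, 0 < lam → Integrable (fun ρ : ℝ => ρ ^ r * (lam + ρ ^ t) ^ (-s)) ν) ∧
      Tendsto
        (fun lam : ℝ =>
          lam ^ (s - ((n : ℝ) + r) / t) * ∫ ρ, ρ ^ r * (lam + ρ ^ t) ^ (-s) ∂ν)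
        atTop
        (nhds (((n : ℝ) / t) * θ *
          (Real.Gamma (((n : ℝ) + r) / t) * Real.Gamma (s - ((n : ℝ) + r) / t) /
            Real.Gamma s))) := by
  have hIic : ∀ u, ν (Iic u) = ν (Icc 0 u) := fun u => by
    rw [← measure_sdiff_null hνneg]
    congr 1
    ext
    simp [and_comm]
  have hω : 0 ≤ ballVol n := by unfold ballVol; positivity
  refine integrable_and_tendsto_rpow_mul_integral_rpow_mul_add_rpow_neg ν (ω := ballVol n)
    (measure_Iic_zero_eq_zero (by omega) hνneg hbound) (fun u => ?_) (fun u hu => ?_) ?_ ht hnr hst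
  · have hlt : ν (Iic (max u 1)) < ∞ :=
      ((hIic _).trans_le (hbound _ (by positivity))).trans_lt ENNReal.ofReal_lt_top
    exact ((measure_mono (Iic_subset_Iic.2 (le_max_left u 1))).trans_lt hlt).ne
  · exact hIic u ▸ ENNReal.toReal_le_of_le_ofReal (by positivity) (hbound u hu)
  · simpa only [hIic] using hθ

/-- Finiteness and asymptotics of the weighted Talentian-bubble functional `K(λ, r, t, s)`
(Section 5). -/
theorem weighted_bubble_asymptotics (n : ℕ) (hn : 2 ≤ n) (s t r : ℝ) (hs : 0 < s)
    (ht : 0 < t) (hnr : 0 < (n : ℝ) + r) (hst : (n : ℝ) + r < s * t)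
    (ν : Measure ℝ) (hνneg : ν (Set.Iio 0) = 0)
    (hmono : AntitoneOn (fun ρ : ℝ => (ν (Set.Icc 0 ρ)).toReal / ρ ^ n) (Set.Ioi 0))
    (hbound : ∀ ρ : ℝ, 0 < ρ → ν (Set.Icc 0 ρ) ≤ ENNReal.ofReal (ballVol n * ρ ^ n))
    (θ : ℝ)
    (hθ : Tendsto (fun ρ : ℝ => (ν (Set.Icc 0 ρ)).toReal / ρ ^ n) atTop (nhds θ)) :
    (∀ lam : ℝ, 0 < lam → Integrable (fun ρ : ℝ => ρ ^ r * (lam + ρ ^ t) ^ (-s)) ν) ∧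
      Tendsto
        (fun lam : ℝ =>
          lam ^ (s - ((n : ℝ) + r) / t) * ∫ ρ, ρ ^ r * (lam + ρ ^ t) ^ (-s) ∂ν)
        atTop
        (nhds (((n : ℝ) / t) * θ *
          (Real.Gamma (((n : ℝ) + r) / t) * Real.Gamma (s - ((n : ℝ) + r) / t) /
            Real.Gamma s))) :=
  weighted_bubble_asymptotics_general n hn s t r ht hnr hst ν hνneg hbound θ hθ
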